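/- arXiv:2108.04638 — 2 statements merged into one kernel-verified Lean document; each statement's English description precedes it below -/
import Mathlib

section
/- Let d ≥ 2, Λ a unimodular lattice in ℝ^d, and r ∈ (0,1/4) with Λ ∩ (r−1,1−r)^d = {0}. If F ⊂ ℝ^d is a fundamental domain for ℝ^d/Λ, then the Lebesgue measure of F \ (Λ + (½(r−1), ½(1−r))^d) equals 1 − (1−r)^d, which is less than d·r. -/
open Set MeasureTheory

/-- The lattice in `ℝ^d` generated by the columns of the matrix `g`. -/
def lat {d : ℕ} (g : Matrix (Fin d) (Fin d) ℝ) : Set (Fin d → ℝ) :=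
  {v | ∃ m : Fin d → ℤ, v = g.mulVec (fun i => (m i : ℝ))}

/-!
Since `Λ` meets `(r - 1, 1 - r)^d` only in `0`, the `Λ`-translates of the open cube `Q` of side
`1 - r` are pairwise disjoint. Unfolding `F` along `Λ` then shows that their union meets `F` in
a set of the same volume as `Q`, namely `(1 - r)^d`, while `F` has volume `det g = 1`.
The inequality is the strict Bernoulli inequality.
-/

open Pointwise Function

theorem isAddFundamentalDomain_of_existsUnique_sub_mem {E : Type*} [AddCommGroup E]
    [MeasurableSpace E] {μ : Measure E} (L : AddSubgroup E) {F : Set E}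
    (hF : NullMeasurableSet F μ) (h : ∀ x, ∃! v, v ∈ L ∧ x - v ∈ F) :
    IsAddFundamentalDomain L F μ := by
  refine .mk' hF fun x => ?_
  obtain ⟨v, ⟨hvL, hvF⟩, hv_unique⟩ := h x
  refine ⟨-⟨v, hvL⟩, show -v + x ∈ F by rwa [neg_add_eq_sub], ?_⟩
  rintro w (hw : (w : E) + x ∈ F)
  rw [eq_neg_iff_add_eq_zero, ← Subtype.coe_inj]
  have := hv_unique (-w) ⟨neg_mem w.2, by rwa [sub_neg_eq_add, add_comm]⟩
  simp [← this]

section FundamentalDomain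

variable {G α : Type*} [AddGroup G] [AddAction G α] [MeasurableSpace α] {μ : Measure α}
  [MeasurableConstVAdd G α] [VAddInvariantMeasure G α μ] [Countable G]

theorem MeasureTheory.IsAddFundamentalDomain.measure_inter_iUnion_vadd {s t : Set α}
    (hs : IsAddFundamentalDomain G s μ) (ht : MeasurableSet t)
    (hdisj : Pairwise (Disjoint on fun g : G => g +ᵥ t)) :
    μ (s ∩ ⋃ g : G, g +ᵥ t) = μ t := by
  rw [hs.measure_eq_tsum t, inter_comm, iUnion_inter, measure_iUnion₀]
  · exact fun g h hgh => (hdisj hgh).aedisjoint.mono inter_subset_left inter_subset_left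
  · exact fun g => (ht.const_vadd g).nullMeasurableSet.inter hs.nullMeasurableSet

theorem MeasureTheory.IsAddFundamentalDomain.measure_diff_iUnion_vadd {s t : Set α}
    (hs : IsAddFundamentalDomain G s μ) (ht : MeasurableSet t)
    (hdisj : Pairwise (Disjoint on fun g : G => g +ᵥ t)) (ht_fin : μ t ≠ ⊤) :
    μ (s \ ⋃ g : G, g +ᵥ t) = μ s - μ t := by
  have h := hs.measure_inter_iUnion_vadd ht hdisj
  rw [← sdiff_self_inter, measure_sdiff inter_subset_left
    (hs.nullMeasurableSet.inter (.iUnion fun g => (ht.const_vadd g).nullMeasurableSet))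
    (h ▸ ht_fin), h]

end FundamentalDomain

namespace Matrix

variable {ι : Type*} [Fintype ι] [DecidableEq ι] (g : Matrix ι ι ℝ) (hg : IsUnit g.det)

noncomputable def colBasis : Module.Basis ι ℝ (ι → ℝ) :=
  (Pi.basisFun ℝ ι).map (g.toLinearEquiv' (g.invertibleOfIsUnitDet hg))

theorem colBasis_apply (i : ι) : g.colBasis hg i = g.col i := by
  simp [colBasis, toLinearEquiv']

theorem of_colBasis : Matrix.of (g.colBasis hg) = gᵀ := by
  ext i j
  simp [colBasis_apply]

theorem mulVec_eq_sum_smul_colBasis (c : ι → ℝ) : g *ᵥ c = ∑ i, c i • g.colBasis hg i := by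
  simp only [colBasis_apply, mulVec_eq_sum, op_smul_eq_smul]
  rfl

end Matrix

theorem lat_eq_span {d : ℕ} (g : Matrix (Fin d) (Fin d) ℝ) (hg : IsUnit g.det) :
    lat g = Submodule.span ℤ (range (g.colBasis hg)) := by
  ext x
  simp only [lat, mem_ofPred_eq, SetLike.mem_coe, Submodule.mem_span_range_iff_exists_fun,
    g.mulVec_eq_sum_smul_colBasis hg, Int.cast_smul_eq_zsmul, eq_comm]

section Cubes

variable {ι : Type*}

theorem AddSubgroup.mem_vadd_univ_pi_iff {α : ι → Type*} [∀ i, AddCommGroup (α i)]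
    {L : AddSubgroup (∀ i, α i)} {v : L} {s : ∀ i, Set (α i)} {x : ∀ i, α i} :
    x ∈ v +ᵥ univ.pi s ↔ ∀ i, x i - (v : ∀ i, α i) i ∈ s i := by
  simp [mem_vadd_set_iff_neg_vadd_mem, AddSubgroup.vadd_def, neg_add_eq_sub]

theorem AddSubgroup.iUnion_vadd_univ_pi {α : ι → Type*} [∀ i, AddCommGroup (α i)]
    (L : AddSubgroup (∀ i, α i)) (s : ∀ i, Set (α i)) :
    ⋃ v : L, v +ᵥ univ.pi s = {x | ∃ v ∈ L, ∀ i, x i - v i ∈ s i} := by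
  ext x
  simp [mem_vadd_univ_pi_iff]

theorem AddSubgroup.pairwise_disjoint_vadd_pi_Ioo (L : AddSubgroup (ι → ℝ)) {a b : ℝ}
    (hL : ∀ v ∈ L, (∀ i, v i ∈ Ioo (a - b) (b - a)) → v = 0) :
    Pairwise (Disjoint on fun v : L => (v +ᵥ univ.pi fun _ => Ioo a b : Set (ι → ℝ))) := by
  intro v w hvw
  refine Set.disjoint_left.mpr fun x hxv hxw => hvw ?_
  rw [mem_vadd_univ_pi_iff] at hxv hxw
  have := hL _ (sub_mem w.2 v.2) fun i => ?_
  · exact Subtype.ext (sub_eq_zero.mp this).symm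
  · obtain ⟨hv₁, hv₂⟩ := hxv i
    obtain ⟨hw₁, hw₂⟩ := hxw i
    simp only [Pi.sub_apply, mem_Ioo]
    constructor <;> linarith

theorem Real.volume_pi_Ioo_const [Fintype ι] (a b : ℝ) :
    volume (univ.pi fun _ : ι => Ioo a b) = ENNReal.ofReal (b - a) ^ Fintype.card ι := by
  simp [Real.volume_pi_Ioo]

end Cubes

theorem one_sub_one_sub_pow_lt {n : ℕ} (hn : 2 ≤ n) {r : ℝ} (hr₀ : 0 < r) (hr₁ : r ≤ 1) :
    1 - (1 - r) ^ n < n * r := by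
  have := one_add_mul_self_lt_rpow_one_add (s := -r) (by linarith) (by linarith)
    (p := n) (by exact_mod_cast hn)
  rw [Real.rpow_natCast, ← sub_eq_add_neg] at this
  linarith

theorem volume_fundamental_domain_minus_cubes
    {d : ℕ} (hd : 2 ≤ d) (g : Matrix (Fin d) (Fin d) ℝ) (hg : g.det = 1)
    (r : ℝ) (hr : r ∈ Set.Ioo (0 : ℝ) (1/4))
    (hΛ : ∀ v ∈ lat g, (∀ i, v i ∈ Set.Ioo (r - 1) (1 - r)) → v = 0)
    (F : Set (Fin d → ℝ)) (hF : MeasurableSet F)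
    (hfund : ∀ x : Fin d → ℝ, ∃! v, v ∈ lat g ∧ x - v ∈ F) :
    volume (F \ {x | ∃ v ∈ lat g, ∀ i, x i - v i ∈ Set.Ioo ((r - 1)/2) ((1 - r)/2)})
      = ENNReal.ofReal (1 - (1 - r) ^ d) ∧ 1 - (1 - r) ^ d < d * r := by
  obtain ⟨hr₀, hr₁⟩ := hr
  refine ⟨?_, one_sub_one_sub_pow_lt hd hr₀ (by linarith)⟩
  have hg' : IsUnit g.det := hg ▸ isUnit_one
  set L := (Submodule.span ℤ (range (g.colBasis hg'))).toAddSubgroup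
  have hL : lat g = L := lat_eq_span g hg'
  simp only [hL, SetLike.mem_coe] at hΛ hfund ⊢
  have : Countable L := inferInstanceAs (Countable (Submodule.span ℤ _))
  have hFL : IsAddFundamentalDomain L F volume :=
    isAddFundamentalDomain_of_existsUnique_sub_mem L hF.nullMeasurableSet hfund
  have hvolF : volume F = 1 := by
    rw [hFL.measure_eq (ZSpan.isAddFundamentalDomain' _ volume),
      ZSpan.volume_fundamentalDomain, g.of_colBasis, Matrix.det_transpose, hg]
    simp
  have hdisj := L.pairwise_disjoint_vadd_pi_Ioo (a := (r - 1) / 2) (b := (1 - r) / 2) <| by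
    convert hΛ using 6 <;> ring
  have hcube : volume (univ.pi fun _ : Fin d => Ioo ((r - 1) / 2) ((1 - r) / 2))
      = ENNReal.ofReal ((1 - r) ^ d) := by
    rw [Real.volume_pi_Ioo_const, Fintype.card_fin, ← ENNReal.ofReal_pow (by linarith)]
    ring_nf
  rw [← L.iUnion_vadd_univ_pi, hFL.measure_diff_iUnion_vadd (.univ_pi fun _ => measurableSet_Ioo)
    hdisj (hcube ▸ ENNReal.ofReal_ne_top), hvolF, hcube, ← ENNReal.ofReal_one,
    ← ENNReal.ofReal_sub _ (pow_nonneg (by linarith) d)]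
end

section
/- Fix d ≥ 2 and c₀ ∈ (0, 1/(3e)), and a weight-vector flow g_s = diag(e^{α₁s},…,e^{α_m s}, e^{−β₁s},…,e^{−β_n s}) with all α_i, β_j ∈ (0,1], Σα_i = Σβ_j = 1, m + n = d. Suppose Λ is a unimodular lattice in ℝ^d, r ∈ (0, c₀/d), s ∈ [r, 1), and suppose: (i) Λ has a basis b₁,…,b_d with |b_{ji}| < c₀ for j ≠ i and 1 − r/(2d) < b_{ii} < 1 for all i (where b_{ji} is the j-th coordinate of b_i); (ii) the lattice g_{−s}Λ also has such a basis, and moreover both Λ and g_{−s}Λ contain no nonzero point of (r−1, 1−r)^d. Then a contradiction follows; i.e., no such pair (Λ, s) exists. -/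
/-
Pick a weight `α i ≥ 1/m` and let `y := g_{-s} b_i`, a point of `g_{-s}Λ`. Since `s < 1`, the
flow stretches no coordinate by more than `e`, so `|y_j| < e c₀` for `j ≠ i`, while it contracts
the `i`-th one by `e^{-α_i s} ≤ 1 - r/(2m)`, so `0 < y_i < 1 - r/(2d) < b'_{ii}`. As `g_{-s}Λ`
meets the cube `(r-1, 1-r)^d` only in `0`, first `y_i ≥ 1 - r`, and then `b'_i - y` is a nonzero
point of `g_{-s}Λ` inside that cube.
-/

open Set

lemma col_mem_lat {d : ℕ} (B : Matrix (Fin d) (Fin d) ℝ) (i : Fin d) :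
    (fun j => B j i) ∈ lat B :=
  ⟨Pi.single i 1, by ext j; simp [Matrix.mulVec, dotProduct, Pi.single_apply]⟩

lemma sub_mem_lat {d : ℕ} {B : Matrix (Fin d) (Fin d) ℝ} {v w : Fin d → ℝ}
    (hv : v ∈ lat B) (hw : w ∈ lat B) : v - w ∈ lat B := by
  obtain ⟨a, rfl⟩ := hv
  obtain ⟨b, rfl⟩ := hw
  refine ⟨a - b, ?_⟩
  rw [← Matrix.mulVec_sub]
  congr 1
  ext i
  simp

def AvoidsCube {d : ℕ} (L : Set (Fin d → ℝ)) (r : ℝ) : Prop :=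
  ∀ v ∈ L, (∀ i, v i ∈ Ioo (r - 1) (1 - r)) → v = 0

namespace AvoidsCube

variable {d : ℕ} {L : Set (Fin d → ℝ)} {r : ℝ}

lemma one_sub_le_apply (hL : AvoidsCube L r) {v : Fin d → ℝ} (hv : v ∈ L) {i : Fin d}
    (hvi : 0 < v i) (hoff : ∀ j ≠ i, |v j| < 1 - r) : 1 - r ≤ v i := by
  by_contra! hlt
  have hcube : ∀ j, v j ∈ Ioo (r - 1) (1 - r) := by
    intro j
    rcases eq_or_ne j i with rfl | hj
    · exact ⟨by linarith [abs_nonneg (v j)], hlt⟩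
    · exact ⟨by linarith [neg_abs_le (v j), hoff j hj], by linarith [le_abs_self (v j), hoff j hj]⟩
  have := congrFun (hL v hv hcube) i
  simp only [Pi.zero_apply] at this
  linarith

lemma sub_notMem (hL : AvoidsCube L r) (hr : r ≤ 1 / 2) {y b : Fin d → ℝ} (hy : y ∈ L)
    {i : Fin d} (hyi : 0 < y i) (hyb : y i < b i) (hb : b i < 1)
    (hoff : ∀ j ≠ i, |y j| + |b j| < 1 - r) : b - y ∉ L := by
  intro hby
  have hyi' : 1 - r ≤ y i :=
    hL.one_sub_le_apply hy hyi fun j hj => by linarith [abs_nonneg (b j), hoff j hj]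
  have hcube : ∀ j, (b - y) j ∈ Ioo (r - 1) (1 - r) := by
    intro j
    rcases eq_or_ne j i with rfl | hj
    · exact ⟨by simp only [Pi.sub_apply]; linarith, by simp only [Pi.sub_apply]; linarith⟩
    · have := (abs_sub (b j) (y j)).trans_lt ((add_comm _ _).trans_lt (hoff j hj))
      simpa only [Pi.sub_apply, mem_Ioo, neg_sub] using abs_lt.mp this
  have := congrFun (hL _ hby hcube) i
  simp only [Pi.sub_apply, Pi.zero_apply] at this
  linarith

end AvoidsCube

lemma exists_inv_le_of_sum_eq_one {m : ℕ} {α : Fin m → ℝ} (hα : ∑ i, α i = 1) :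
    ∃ i, (m : ℝ)⁻¹ ≤ α i := by
  have hne : (Finset.univ : Finset (Fin m)).Nonempty :=
    Finset.nonempty_of_sum_ne_zero (by rw [hα]; exact one_ne_zero)
  have hm : (m : ℝ) ≠ 0 := by simpa using hne.card_pos.ne'
  obtain ⟨i, -, hi⟩ := Finset.exists_le_of_sum_le hne (f := fun _ => (m : ℝ)⁻¹) (g := α)
    (by simp [hα, hm])
  exact ⟨i, hi⟩

lemma abs_append_neg_le_one {m n : ℕ} {α : Fin m → ℝ} {β : Fin n → ℝ}
    (hα : ∀ i, |α i| ≤ 1) (hβ : ∀ j, |β j| ≤ 1) (k : Fin (m + n)) :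
    |Fin.append α (fun j => -β j) k| ≤ 1 := by
  refine Fin.addCases (fun i => ?_) (fun j => ?_) k
  · simpa using hα i
  · simpa using hβ j

lemma abs_exp_neg_mul_mul_lt {a s b c : ℝ} (ha : |a| ≤ 1) (hs₀ : 0 ≤ s) (hs₁ : s < 1)
    (hb : |b| < c) : |Real.exp (-(a * s)) * b| < Real.exp 1 * c := by
  have hexp : Real.exp (-(a * s)) < Real.exp 1 := by
    refine Real.exp_lt_exp.mpr ?_
    calc -(a * s) ≤ |a * s| := neg_le_abs _
      _ = |a| * s := by rw [abs_mul, abs_of_nonneg hs₀]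
      _ ≤ 1 * s := by gcongr
      _ < 1 := by linarith
  rw [abs_mul, abs_of_pos (Real.exp_pos _)]
  calc Real.exp (-(a * s)) * |b| ≤ Real.exp 1 * |b| := by gcongr
    _ < Real.exp 1 * c := by gcongr

lemma exp_one_mul_lt_one_third {c : ℝ} (hc : c < 1 / (3 * Real.exp 1)) :
    Real.exp 1 * c < 1 / 3 := by
  rw [lt_div_iff₀ (by positivity)] at hc
  linarith

lemma exp_neg_mul_lt_one_sub_half {x b : ℝ} (hx₀ : 0 ≤ x) (hx₁ : x ≤ 1) (hb : b < 1) :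
    Real.exp (-x) * b < 1 - x / 2 := by
  have h : Real.exp (-x) * Real.exp x = 1 := by rw [← Real.exp_add, neg_add_cancel, Real.exp_zero]
  have hexp : Real.exp (-x) ≤ 1 - x / 2 := by nlinarith [Real.add_one_le_exp x, Real.exp_pos (-x)]
  exact (mul_lt_of_lt_one_right (Real.exp_pos _) hb).trans_le hexp

theorem disjointness_lemma_general
    (m n : ℕ)
    (c₀ : ℝ) (hc₀ : c₀ ∈ Set.Ioo (0 : ℝ) (1 / (3 * Real.exp 1)))
    (α : Fin m → ℝ) (β : Fin n → ℝ)
    (hα : ∀ i, α i ∈ Set.Ioc (0 : ℝ) 1) (hβ : ∀ j, β j ∈ Set.Ioc (0 : ℝ) 1)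
    (hαs : ∑ i, α i = 1)
    (e : Fin (m + n) → ℝ) (he : e = Fin.append α (fun j => -β j))
    (r s : ℝ) (hr : 0 < r) (hr' : r < c₀ / (m + n)) (hs : r ≤ s) (hs' : s < 1)
    (B B' : Matrix (Fin (m + n)) (Fin (m + n)) ℝ)
    (hBoff : ∀ i j : Fin (m + n), j ≠ i → |B j i| < c₀)
    (hBdiag : ∀ i, 1 - r / (2 * (m + n)) < B i i ∧ B i i < 1)
    (hB'basis :
      lat ((Matrix.diagonal fun i => Real.exp (-(e i * s))) * B) = lat B')
    (hB'off : ∀ i j : Fin (m + n), j ≠ i → |B' j i| < c₀)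
    (hB'diag : ∀ i, 1 - r / (2 * (m + n)) < B' i i ∧ B' i i < 1)
    (hΛ' : ∀ v ∈ lat B', (∀ i, v i ∈ Set.Ioo (r - 1) (1 - r)) → v = 0) :
    False := by
  obtain ⟨i₁, hi₁⟩ := exists_inv_le_of_sum_eq_one hαs
  have hm : (1 : ℝ) ≤ m := mod_cast i₁.pos
  have hd : (m : ℝ) ≤ m + n := by simp
  have hrc : r < c₀ := hr'.trans_le (div_le_self hc₀.1.le (by linarith))
  have hec₀ : Real.exp 1 * c₀ < 1 / 3 := exp_one_mul_lt_one_third hc₀.2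
  have hc₀e : c₀ ≤ Real.exp 1 * c₀ :=
    le_mul_of_one_le_left hc₀.1.le (by linarith [Real.add_one_le_exp 1])
  have he₁ : ∀ k, |e k| ≤ 1 := he ▸ abs_append_neg_le_one
    (fun i => abs_le.mpr ⟨by linarith [(hα i).1], (hα i).2⟩)
    (fun j => abs_le.mpr ⟨by linarith [(hβ j).1], (hβ j).2⟩)
  set i := Fin.castAdd n i₁
  set y : Fin (m + n) → ℝ := fun j => Real.exp (-(e j * s)) * B j i
  have hy : y ∈ lat B' := by
    rw [← hB'basis]
    simpa only [Matrix.diagonal_mul] using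
      col_mem_lat ((Matrix.diagonal fun k => Real.exp (-(e k * s))) * B) i
  have hαs₀ : 0 ≤ α i₁ * s := mul_nonneg (hα i₁).1.le (hr.le.trans hs)
  have hαs₁ : α i₁ * s ≤ 1 := mul_le_one₀ (hα i₁).2 (hr.le.trans hs) hs'.le
  have hrs : r / (2 * (m + n)) ≤ α i₁ * s / 2 := calc
    r / (2 * (m + n)) ≤ r / (2 * m) := by gcongr
    _ = (m : ℝ)⁻¹ * r / 2 := by ring
    _ ≤ α i₁ * s / 2 := by gcongr; exact (hα i₁).1.le
  have hyi : y i < 1 - α i₁ * s / 2 := by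
    have hei : e i = α i₁ := by rw [he, Fin.append_left]
    simpa only [y, hei] using exp_neg_mul_lt_one_sub_half hαs₀ hαs₁ (hBdiag i).2
  refine AvoidsCube.sub_notMem hΛ' (by linarith) hy (b := fun j => B' j i)
    (mul_pos (Real.exp_pos _) (by linarith [(hBdiag i).1])) (by linarith [(hB'diag i).1])
    (hB'diag i).2 (fun j hj => ?_) (sub_mem_lat (col_mem_lat B' i) hy)
  have hyj : |y j| < Real.exp 1 * c₀ :=
    abs_exp_neg_mul_mul_lt (he₁ j) (hr.le.trans hs) hs' (hBoff i j hj)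
  linarith [hB'off i j hj]

theorem disjointness_lemma
    (m n : ℕ) (hm : 0 < m) (hn : 0 < n) (hd : 2 ≤ m + n)
    (c₀ : ℝ) (hc₀ : c₀ ∈ Set.Ioo (0 : ℝ) (1 / (3 * Real.exp 1)))
    (α : Fin m → ℝ) (β : Fin n → ℝ)
    (hα : ∀ i, α i ∈ Set.Ioc (0 : ℝ) 1) (hβ : ∀ j, β j ∈ Set.Ioc (0 : ℝ) 1)
    (hαs : ∑ i, α i = 1) (hβs : ∑ j, β j = 1)
    (e : Fin (m + n) → ℝ) (he : e = Fin.append α (fun j => -β j))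
    (r s : ℝ) (hr : 0 < r) (hr' : r < c₀ / (m + n)) (hs : r ≤ s) (hs' : s < 1)
    (B B' : Matrix (Fin (m + n)) (Fin (m + n)) ℝ)
    (hBdet : |B.det| = 1)
    (hBoff : ∀ i j : Fin (m + n), j ≠ i → |B j i| < c₀)
    (hBdiag : ∀ i, 1 - r / (2 * (m + n)) < B i i ∧ B i i < 1)
    (hB'basis :
      lat ((Matrix.diagonal fun i => Real.exp (-(e i * s))) * B) = lat B')
    (hB'off : ∀ i j : Fin (m + n), j ≠ i → |B' j i| < c₀)
    (hB'diag : ∀ i, 1 - r / (2 * (m + n)) < B' i i ∧ B' i i < 1)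
    (hΛ : ∀ v ∈ lat B, (∀ i, v i ∈ Set.Ioo (r - 1) (1 - r)) → v = 0)
    (hΛ' : ∀ v ∈ lat B', (∀ i, v i ∈ Set.Ioo (r - 1) (1 - r)) → v = 0) :
    False :=
  disjointness_lemma_general m n c₀ hc₀ α β hα hβ hαs e he r s hr hr' hs hs' B B' hBoff hBdiag
    hB'basis hB'off hB'diag hΛ'
end
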